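/- arXiv:1811.09616 — 7 statements merged into one kernel-verified Lean document; each statement's English description precedes it below -/
import Mathlib

section
/- Let (e_n) be a monotonically decreasing positive sequence converging to 0, and suppose there exist natural numbers l₀ ≥ 1 and n₀ ≥ l₀ and a constant C₀ > 0 such that e_{n-l₀} - e_n ≥ C₀ e_n^{2θ} for all n ≥ n₀, where θ ∈ (0, 1/2]. Then there exist C₁ > 0 and Q ∈ [0,1) such that e_n ≤ C₁ Q^n for every n ≥ n₀. -/
open Filter Topology

/-- If a decreasing positive sequence tending to 0 satisfies
`e (n - l₀) - e n ≥ C₀ (e n)^(2θ)` for `n ≥ n₀` with `θ ∈ (0, 1/2]`,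
then it converges linearly: `e n ≤ C₁ Q^n` for `n ≥ n₀`, with `Q ∈ [0,1)`. -/
theorem linear_rate (e : ℕ → ℝ) (hpos : ∀ n, 0 < e n) (hmono : ∀ n, e (n + 1) ≤ e n)
    (hlim : Tendsto e atTop (𝓝 0)) (l₀ n₀ : ℕ) (hl₀ : 1 ≤ l₀) (hn₀ : l₀ ≤ n₀)
    (C₀ : ℝ) (hC₀ : 0 < C₀) (θ : ℝ) (hθ₁ : 0 < θ) (hθ₂ : θ ≤ 1 / 2)
    (hrec : ∀ n ≥ n₀, e (n - l₀) - e n ≥ C₀ * e n ^ (2 * θ)) :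
    ∃ C₁ > (0 : ℝ), ∃ Q ∈ Set.Ico (0 : ℝ) 1, ∀ n ≥ n₀, e n ≤ C₁ * Q ^ n := by
  have hanti : Antitone e := antitone_nat_of_succ_le hmono
  obtain ⟨N₁, hN₁⟩ := Filter.eventually_atTop.mp (hlim.eventually (gt_mem_nhds one_pos))
  set N := max N₁ n₀ with hN
  have hNn₀ : n₀ ≤ N := le_max_right _ _
  have hl₀pos : 0 < l₀ := hl₀
  have hle1 : ∀ n ≥ N, e n ≤ 1 := fun n hn => (hN₁ n (le_trans (le_max_left _ _) hn)).le
  -- key geometric step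
  have key : ∀ n ≥ N, e n * (1 + C₀) ≤ e (n - l₀) := by
    intro n hn
    have h1 := hrec n (le_trans hNn₀ hn)
    have h2 : e n ≤ e n ^ (2 * θ) := by
      calc e n = e n ^ (1 : ℝ) := (Real.rpow_one _).symm
        _ ≤ e n ^ (2 * θ) :=
          Real.rpow_le_rpow_of_exponent_ge (hpos n) (hle1 n hn) (by linarith)
    nlinarith [hpos n]
  set ρ : ℝ := (1 + C₀)⁻¹ with hρ
  have hρ0 : 0 < ρ := by positivity
  have hρ1 : ρ < 1 := by
    rw [hρ, inv_lt_one_iff₀]; right; linarith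
  have step : ∀ n ≥ N, e n ≤ ρ * e (n - l₀) := by
    intro n hn
    have := key n hn
    rw [hρ, inv_mul_eq_div, le_div_iff₀ (by linarith : (0:ℝ) < 1 + C₀)]
    linarith
  -- main induction
  have main : ∀ n, N ≤ n → e n ≤ e N * ρ ^ ((n - N) / l₀) := by
    intro n
    induction n using Nat.strong_induction_on with
    | _ n ih =>
      intro hn
      by_cases hcase : n < N + l₀
      · have : n - N < l₀ := by omega
        rw [Nat.div_eq_of_lt this, pow_zero, mul_one]
        exact hanti hn
      · push_neg at hcase
        have hsub : n - l₀ < n := by omega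
        have hNsub : N ≤ n - l₀ := by omega
        have h1 : e n ≤ ρ * e (n - l₀) := step n hn
        have h2 := ih (n - l₀) hsub hNsub
        have hdiv : (n - N) / l₀ = (n - l₀ - N) / l₀ + 1 := by
          have : n - N = (n - l₀ - N) + l₀ := by omega
          rw [this, Nat.add_div_right _ hl₀pos]
        rw [hdiv, pow_succ]
        calc e n ≤ ρ * e (n - l₀) := h1
          _ ≤ ρ * (e N * ρ ^ ((n - l₀ - N) / l₀)) := by
              exact mul_le_mul_of_nonneg_left h2 hρ0.le
          _ = e N * (ρ ^ ((n - l₀ - N) / l₀) * ρ) := by ring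
  set Q : ℝ := ρ ^ ((1 : ℝ) / l₀) with hQ
  have hQ0 : 0 < Q := Real.rpow_pos_of_pos hρ0 _
  have hQ1 : Q < 1 := Real.rpow_lt_one hρ0.le hρ1 (by positivity)
  -- relate ρ ^ (m / l₀) to Q ^ m
  have hQpow : ∀ m : ℕ, (Q : ℝ) ^ m = ρ ^ ((m : ℝ) / l₀) := by
    intro m
    rw [hQ, ← Real.rpow_natCast (ρ ^ ((1:ℝ)/l₀)) m, ← Real.rpow_mul hρ0.le]
    ring_nf
  have pow_bound : ∀ m : ℕ, ρ ^ (m / l₀) ≤ ρ⁻¹ * Q ^ m := by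
    intro m
    rw [hQpow]
    have h1 : ρ⁻¹ * ρ ^ ((m : ℝ) / l₀) = ρ ^ ((m : ℝ) / l₀ - 1) := by
      rw [Real.rpow_sub hρ0, Real.rpow_one]; ring
    rw [h1, ← Real.rpow_natCast ρ (m / l₀)]
    apply Real.rpow_le_rpow_of_exponent_ge hρ0 hρ1.le
    have hm : m < (m / l₀ + 1) * l₀ := by
      rw [← Nat.div_lt_iff_lt_mul hl₀pos]; omega
    have hm' : (m : ℝ) < ((m / l₀ : ℕ) + 1) * l₀ := by exact_mod_cast hm
    have hl' : (0 : ℝ) < l₀ := by exact_mod_cast hl₀pos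
    rw [sub_le_iff_le_add, div_le_iff₀ hl']
    nlinarith
  -- assemble constants
  set A : ℝ := e N * ρ⁻¹ / Q ^ N with hA
  set B : ℝ := e n₀ / Q ^ N with hB
  have hA0 : 0 < A := by have := hpos N; positivity
  have hB0 : 0 < B := by have := hpos n₀; positivity
  refine ⟨max A B, lt_max_of_lt_left hA0, Q, ⟨hQ0.le, hQ1⟩, ?_⟩
  intro n hn
  by_cases hcase : N ≤ n
  · have h1 := main n hcase
    have h2 := pow_bound (n - N)
    have h3 : (Q : ℝ) ^ (n - N) = Q ^ n / Q ^ N := by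
      rw [eq_div_iff (by positivity : (Q:ℝ)^N ≠ 0), ← pow_add]
      congr 1; omega
    have h4 : e n ≤ e N * (ρ⁻¹ * Q ^ (n - N)) := by
      calc e n ≤ e N * ρ ^ ((n - N) / l₀) := h1
        _ ≤ e N * (ρ⁻¹ * Q ^ (n - N)) :=
            mul_le_mul_of_nonneg_left h2 (hpos N).le
    have h5 : e n ≤ A * Q ^ n := by
      rw [hA]; rw [h3] at h4
      calc e n ≤ e N * (ρ⁻¹ * (Q ^ n / Q ^ N)) := h4
        _ = e N * ρ⁻¹ / Q ^ N * Q ^ n := by ring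
    calc e n ≤ A * Q ^ n := h5
      _ ≤ max A B * Q ^ n := by
          apply mul_le_mul_of_nonneg_right (le_max_left _ _) (by positivity)
  · push_neg at hcase
    have h1 : e n ≤ e n₀ := hanti hn
    have h2 : (Q : ℝ) ^ N ≤ Q ^ n :=
      pow_le_pow_of_le_one hQ0.le hQ1.le (by omega)
    have h3 : e n ≤ B * Q ^ n := by
      rw [hB]
      calc e n ≤ e n₀ := h1
        _ = e n₀ / Q ^ N * Q ^ N := by field_simp
        _ ≤ e n₀ / Q ^ N * Q ^ n := by
            apply mul_le_mul_of_nonneg_left h2 (by positivity)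
    calc e n ≤ B * Q ^ n := h3
      _ ≤ max A B * Q ^ n :=
          mul_le_mul_of_nonneg_right (le_max_right _ _) (by positivity)
end

section
/- Let (e_n) be a monotonically decreasing positive sequence converging to 0, and suppose there exist natural numbers l₀ ≥ 1 and n₀ ≥ l₀ and a constant C₀ > 0 such that e_{n-l₀} - e_n ≥ C₀ e_n^{2θ} for all n ≥ n₀, where θ ∈ [1/2, 1). Then there exists C₂ > 0 such that e_n ≤ C₂ (n - l₀ + 1)^{-1/(2θ-1)} for every n ≥ n₀ + l₀. -/
open Filter Topology

/-- Bernoulli-type: for `0 < x ≤ y` and `β ∈ (0,1]`, `y^β - x^β ≥ β * (y-x) * y^(β-1)`. -/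
lemma aux_concave {x y β : ℝ} (hx : 0 < x) (hxy : x ≤ y) (hβ0 : 0 < β) (hβ1 : β ≤ 1) :
    β * (y - x) * y ^ (β - 1) ≤ y ^ β - x ^ β := by
  have hy : 0 < y := hx.trans_le hxy
  have ht : x / y ≤ 1 := div_le_one_of_le₀ hxy hy.le
  have ht0 : 0 < x / y := div_pos hx hy
  have hB : (1 + (x / y - 1)) ^ β ≤ 1 + β * (x / y - 1) :=
    rpow_one_add_le_one_add_mul_self (by linarith) hβ0.le hβ1
  rw [show (1 : ℝ) + (x / y - 1) = x / y by ring] at hB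
  have hdiv : (x / y) ^ β = x ^ β / y ^ β := Real.div_rpow hx.le hy.le β
  rw [hdiv] at hB
  have hyβ : 0 < y ^ β := Real.rpow_pos_of_pos hy β
  have hsub : y ^ (β - 1) = y ^ β / y := by
    rw [Real.rpow_sub hy, Real.rpow_one]
  rw [hsub]
  have h2 : x ^ β ≤ (1 + β * (x / y - 1)) * y ^ β := by
    rw [div_le_iff₀ hyβ] at hB; linarith
  have h3 : (1 + β * (x / y - 1)) * y ^ β = y ^ β - β * (y - x) * (y ^ β / y) := by
    field_simp
    ring
  linarith [h3 ▸ h2]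

/-- If a decreasing positive sequence tending to 0 satisfies
`e (n - l₀) - e n ≥ C₀ (e n)^(2θ)` for `n ≥ n₀` with `θ ∈ [1/2, 1)`,
then `e n ≤ C₂ (n - l₀ + 1)^(-1/(2θ-1))` for every `n ≥ n₀ + l₀`. -/
theorem sublinear_rate (e : ℕ → ℝ) (hpos : ∀ n, 0 < e n) (hmono : ∀ n, e (n + 1) ≤ e n)
    (hlim : Tendsto e atTop (𝓝 0)) (l₀ n₀ : ℕ) (hl₀ : 1 ≤ l₀) (hn₀ : l₀ ≤ n₀)
    (C₀ : ℝ) (hC₀ : 0 < C₀) (θ : ℝ) (hθ₁ : 1 / 2 ≤ θ) (hθ₂ : θ < 1)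
    (hrec : ∀ n ≥ n₀, e (n - l₀) - e n ≥ C₀ * e n ^ (2 * θ)) :
    ∃ C₂ > (0 : ℝ), ∀ n ≥ n₀ + l₀,
      e n ≤ C₂ * ((n : ℝ) - (l₀ : ℝ) + 1) ^ (-(1 / (2 * θ - 1))) := by
  have hAnti : Antitone e := antitone_nat_of_succ_le hmono
  rcases eq_or_lt_of_le hθ₁ with hθ | hθ
  · -- θ = 1/2 : exponent is -(1/0) = 0, bound is a constant
    refine ⟨e 0, hpos 0, fun n _ => ?_⟩
    have h0 : 2 * θ - 1 = 0 := by rw [← hθ]; ring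
    rw [h0]
    simp only [div_zero, neg_zero, Real.rpow_zero, mul_one]
    exact hAnti (Nat.zero_le n)
  · set β : ℝ := 2 * θ - 1 with hβdef
    have hβ0 : 0 < β := by simp only [hβdef]; linarith
    have hβ1 : β < 1 := by simp only [hβdef]; linarith
    set a : ℕ → ℝ := fun k => e (n₀ + k * l₀) with ha
    have hapos : ∀ k, 0 < a k := fun k => hpos _
    have haanti : ∀ k, a (k + 1) ≤ a k := by
      intro k
      exact hAnti (by nlinarith)
    have hae0 : ∀ k, a k ≤ e 0 := fun k => hAnti (Nat.zero_le _)
    set c : ℝ := min (β * C₀ / 2) (((2:ℝ) ^ β - 1) * (e 0) ^ (-β)) with hc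
    have h2β : (1:ℝ) < 2 ^ β :=
      (Real.one_lt_rpow_iff_of_pos (by norm_num)).2 (Or.inl ⟨by norm_num, hβ0⟩)
    have hγ : -(1 / β) ≤ 0 := by
      have : (0:ℝ) < 1 / β := by positivity
      linarith
    have hcpos : 0 < c := by
      apply lt_min
      · positivity
      · have := Real.rpow_pos_of_pos (hpos 0) (-β)
        nlinarith
    -- key step inequality
    have key : ∀ x y : ℝ, 0 < x → x ≤ y → C₀ * x ^ (2 * θ) ≤ y - x → y ≤ e 0 →
        c ≤ x ^ (-β) - y ^ (-β) := by
      intro x y hx hxy hrec' hye0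
      have hy : 0 < y := hx.trans_le hxy
      have hxβ : 0 < x ^ β := Real.rpow_pos_of_pos hx β
      have hyβ : 0 < y ^ β := Real.rpow_pos_of_pos hy β
      by_cases hhalf : y ≤ 2 * x
      · -- x ≥ y/2
        refine le_trans (min_le_left _ _) ?_
        have hcon : β * (y - x) * y ^ (β - 1) ≤ y ^ β - x ^ β :=
          aux_concave hx hxy hβ0 hβ1.le
        have hyβ1' : (0:ℝ) < y ^ (β - 1) := Real.rpow_pos_of_pos hy _
        have h1 : β * (C₀ * x ^ (2 * θ)) * y ^ (β - 1) ≤ y ^ β - x ^ β :=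
          le_trans (mul_le_mul_of_nonneg_right
            (mul_le_mul_of_nonneg_left hrec' hβ0.le) hyβ1'.le) hcon
        have hx2θ : x ^ (2 * θ) = x * x ^ β := by
          rw [show 2 * θ = 1 + β by simp only [hβdef]; ring, Real.rpow_add hx, Real.rpow_one]
        have hyβ1 : y ^ (β - 1) = y ^ β / y := by
          rw [Real.rpow_sub hy, Real.rpow_one]
        rw [hx2θ, hyβ1] at h1
        rw [Real.rpow_neg hx.le, Real.rpow_neg hy.le]
        have hgoal : β * C₀ / 2 ≤ (y ^ β - x ^ β) / (x ^ β * y ^ β) := by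
          rw [le_div_iff₀ (by positivity)]
          have hxy2 : β * C₀ / 2 * (x ^ β * y ^ β) * y ≤ β * (C₀ * (x * x ^ β)) * y ^ β := by
            nlinarith [mul_nonneg (by positivity : (0:ℝ) ≤ β * C₀ * (x ^ β * y ^ β))
              (by linarith : (0:ℝ) ≤ 2 * x - y)]
          have hre : β * (C₀ * (x * x ^ β)) * (y ^ β / y) =
              β * (C₀ * (x * x ^ β)) * y ^ β / y := by ring
          have h6 : β * C₀ / 2 * (x ^ β * y ^ β) ≤ β * (C₀ * (x * x ^ β)) * (y ^ β / y) := by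
            rw [hre, le_div_iff₀ hy]
            linarith
          linarith
        have heq : (y ^ β - x ^ β) / (x ^ β * y ^ β) = (x ^ β)⁻¹ - (y ^ β)⁻¹ := by
          field_simp
        linarith [heq ▸ hgoal]
      · -- x < y/2
        refine le_trans (min_le_right _ _) ?_
        push_neg at hhalf
        have h1 : (y / 2) ^ (-β) ≤ x ^ (-β) :=
          Real.rpow_le_rpow_of_nonpos hx (by linarith) (by linarith)
        have h2 : (y / 2) ^ (-β) = 2 ^ β * y ^ (-β) := by
          rw [Real.div_rpow hy.le (by norm_num), Real.rpow_neg (by norm_num : (0:ℝ) ≤ 2)]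
          field_simp
        have h3 : (e 0) ^ (-β) ≤ y ^ (-β) :=
          Real.rpow_le_rpow_of_nonpos hy hye0 (by linarith)
        have hy0 : 0 < y ^ (-β) := Real.rpow_pos_of_pos hy _
        nlinarith
    have hstep : ∀ k, c ≤ a (k + 1) ^ (-β) - a k ^ (-β) := by
      intro k
      have hn : n₀ + (k + 1) * l₀ ≥ n₀ := by omega
      have hrec2 := hrec (n₀ + (k + 1) * l₀) hn
      have hsub : n₀ + (k + 1) * l₀ - l₀ = n₀ + k * l₀ := by
        have : (k + 1) * l₀ = k * l₀ + l₀ := by ring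
        omega
      rw [hsub] at hrec2
      exact key (a (k + 1)) (a k) (hapos _) (haanti k) hrec2 (hae0 k)
    have hsum : ∀ k : ℕ, c * k ≤ a k ^ (-β) := by
      intro k
      induction k with
      | zero => simpa using (Real.rpow_pos_of_pos (hapos 0) (-β)).le
      | succ k ih =>
        have := hstep k
        push_cast
        linarith
    -- pointwise bound on the subsequence
    have habd : ∀ k : ℕ, 1 ≤ k → a k ≤ (c * k) ^ (-(1 / β)) := by
      intro k hk
      have hk0 : (0:ℝ) < k := by exact_mod_cast hk
      have hck : 0 < c * k := by positivity
      have h1 : c * k ≤ a k ^ (-β) := hsum k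
      have h2 : (a k ^ (-β)) ^ (-(1 / β)) ≤ (c * k) ^ (-(1 / β)) :=
        Real.rpow_le_rpow_of_nonpos hck h1 hγ
      have h3 : (a k ^ (-β)) ^ (-(1 / β)) = a k := by
        rw [← Real.rpow_mul (hapos k).le]
        rw [show -β * -(1 / β) = 1 by field_simp, Real.rpow_one]
      linarith [h3 ▸ h2]
    set M : ℕ := n₀ + 2 * l₀ with hM
    refine ⟨c ^ (-(1 / β)) * (M : ℝ) ^ (1 / β), by positivity, fun n hn => ?_⟩
    set k : ℕ := (n - n₀) / l₀ with hk
    have hl₀pos : 0 < l₀ := hl₀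
    have hdm : k * l₀ + (n - n₀) % l₀ = n - n₀ := by
      rw [hk]; exact Nat.div_add_mod' _ _
    have hmlt := Nat.mod_lt (n - n₀) hl₀pos
    have hk1 : 1 ≤ k := by
      rw [hk]
      apply Nat.one_le_div_iff hl₀pos |>.2
      omega
    have hkn : n₀ + k * l₀ ≤ n := by
      have : k * l₀ ≤ n - n₀ := Nat.div_mul_le_self _ _
      omega
    have hnup : n + 1 ≤ n₀ + k * l₀ + l₀ := by omega
    have hMk : n₀ + k * l₀ + l₀ ≤ M * k := by
      have h1 : n₀ * 1 ≤ n₀ * k := Nat.mul_le_mul_left _ hk1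
      have h2 : l₀ * 1 ≤ l₀ * k := Nat.mul_le_mul_left _ hk1
      rw [hM]
      nlinarith
    have hbase : (0:ℝ) < (n : ℝ) - (l₀ : ℝ) + 1 := by
      have : l₀ ≤ n := by omega
      have : (l₀ : ℝ) ≤ n := by exact_mod_cast this
      linarith
    have hbaseM : (n : ℝ) - (l₀ : ℝ) + 1 ≤ (M : ℝ) * k := by
      have hnat : n + 1 ≤ M * k := le_trans hnup hMk
      have : ((n:ℕ) : ℝ) + 1 ≤ ((M * k : ℕ) : ℝ) := by exact_mod_cast hnat
      push_cast at this ⊢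
      have hl0 : (0:ℝ) ≤ l₀ := by positivity
      linarith
    have hkpos : (0:ℝ) < (k:ℝ) := by exact_mod_cast hk1
    have hMpos : (0:ℝ) < (M:ℝ) := by
      have : 0 < M := by omega
      exact_mod_cast this
    -- chain of inequalities
    have hEn : e n ≤ a k := hAnti hkn
    have h2 : a k ≤ (c * k) ^ (-(1 / β)) := habd k hk1
    have h4 : ((M:ℝ) * k) ^ (-(1 / β)) ≤ ((n : ℝ) - (l₀ : ℝ) + 1) ^ (-(1 / β)) :=
      Real.rpow_le_rpow_of_nonpos hbase hbaseM hγ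
    have hMM : (M:ℝ) ^ (1 / β) * (M:ℝ) ^ (-(1 / β)) = 1 := by
      rw [← Real.rpow_add hMpos]
      simp
    have h5 : (c * k) ^ (-(1 / β)) =
        c ^ (-(1 / β)) * (M:ℝ) ^ (1 / β) * ((M:ℝ) * k) ^ (-(1 / β)) := by
      rw [Real.mul_rpow hcpos.le hkpos.le, Real.mul_rpow hMpos.le hkpos.le]
      linear_combination (-(c ^ (-(1 / β)) * (k:ℝ) ^ (-(1 / β)))) * hMM
    have hC2pos : 0 < c ^ (-(1 / β)) * (M : ℝ) ^ (1 / β) := by positivity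
    calc e n ≤ (c * k) ^ (-(1 / β)) := hEn.trans h2
      _ = c ^ (-(1 / β)) * (M:ℝ) ^ (1 / β) * ((M:ℝ) * k) ^ (-(1 / β)) := h5
      _ ≤ c ^ (-(1 / β)) * (M : ℝ) ^ (1 / β) * ((n : ℝ) - (l₀ : ℝ) + 1) ^ (-(1 / β)) := by
          exact mul_le_mul_of_nonneg_left h4 hC2pos.le
end

section
/- Suppose g : ℝ^m → ℝ satisfies the Łojasiewicz inequality |g(x) - g(x̄)|^θ ≤ K‖∇g(x)‖ with exponent θ ∈ [1/2, 1) and constant K > 0 on a neighborhood of a critical point x̄ of g. Then the function H(x,y) = g(x) + (1/2)‖y - x‖² satisfies the Łojasiewicz inequality with the same exponent θ (and some constant K' > 0) on a neighborhood of (x̄, x̄). -/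
/-!
Write `d = y - x`. By subadditivity of `t ↦ t ^ θ` for `θ ≤ 1`,
`|H(x, y) - g x̄| ^ θ ≤ |g x - g x̄| ^ θ + (‖d‖² / 2) ^ θ`, and `(‖d‖² / 2) ^ θ ≤ ‖d‖` once
`‖d‖ ≤ 1`, because `2θ ≥ 1`. Both `‖∇g x‖` and `‖d‖` are at most `‖DH(x, y)‖`: on the diagonal
`DH(x, y)` restricts to `Dg x`, and on `{0} × E` to `⟪d, ·⟫`. Hence `K' = K + 1` works.
-/

namespace ContinuousLinearMap

variable {𝕜 E F : Type*} [NontriviallyNormedField 𝕜] [SeminormedAddCommGroup E] [NormedSpace 𝕜 E]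
  [SeminormedAddCommGroup F] [NormedSpace 𝕜 F]

theorem max_norm_le_norm_comp_fst_add_comp_sub (A B : E →L[𝕜] F) :
    max ‖A‖ ‖B‖ ≤ ‖A.comp (fst 𝕜 E E) + B.comp (snd 𝕜 E E - fst 𝕜 E E)‖ := by
  set L := A.comp (fst 𝕜 E E) + B.comp (snd 𝕜 E E - fst 𝕜 E E)
  set diag : E →L[𝕜] E × E := (ContinuousLinearMap.id 𝕜 E).prod (ContinuousLinearMap.id 𝕜 E)
  have hA : L.comp diag = A := by ext; simp [L, diag]
  have hB : L.comp (inr 𝕜 E E) = B := by ext; simp [L]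
  have hdiag : ‖diag‖ ≤ 1 := by
    rw [opNorm_prod, Prod.norm_def, max_self]; exact norm_id_le
  refine max_le ?_ ?_
  · calc ‖A‖ = ‖L.comp diag‖ := by rw [hA]
      _ ≤ ‖L‖ := by grw [opNorm_comp_le, hdiag, mul_one]
  · calc ‖B‖ = ‖L.comp (inr 𝕜 E E)‖ := by rw [hB]
      _ ≤ ‖L‖ := by grw [opNorm_comp_le, norm_inr_le_one, mul_one]

end ContinuousLinearMap

theorem half_sq_rpow_le_self {t θ : ℝ} (ht₀ : 0 ≤ t) (ht₁ : t ≤ 1) (hθ : 1 / 2 ≤ θ) :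
    (1 / 2 * t ^ 2) ^ θ ≤ t := by
  have hθ₀ : 0 ≤ θ := by linarith
  calc (1 / 2 * t ^ 2) ^ θ ≤ (t ^ 2) ^ θ := by gcongr; linarith [sq_nonneg t]
    _ = t ^ (2 * θ) := by rw [← Real.rpow_natCast_mul ht₀]; norm_num
    _ ≤ t ^ (1 : ℝ) := Real.rpow_le_rpow_of_exponent_ge' ht₀ ht₁ zero_le_one (by linarith)
    _ = t := Real.rpow_one t

section Penalty

variable {E : Type*} [NormedAddCommGroup E] [InnerProductSpace ℝ E]

open ContinuousLinearMap

theorem HasFDerivAt.add_half_norm_sub_sq {f : E → ℝ} {f' : E →L[ℝ] ℝ} {x : E}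
    (hf : HasFDerivAt f f' x) (y : E) :
    HasFDerivAt (fun p : E × E => f p.1 + 1 / 2 * ‖p.2 - p.1‖ ^ 2)
      (f'.comp (fst ℝ E E) + (innerSL ℝ (y - x)).comp (snd ℝ E E - fst ℝ E E)) (x, y) := by
  have hsq := ((hasFDerivAt_snd (p := (x, y))).sub hasFDerivAt_fst).norm_sq.const_mul (1 / 2 : ℝ)
  refine ((hf.comp (x, y) hasFDerivAt_fst).add hsq).congr_fderiv ?_
  ext <;> simp

theorem abs_add_half_norm_sub_sq_sub_rpow_le [CompleteSpace E] {f : E → ℝ} {x y : E}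
    {c θ K : ℝ} (hf : DifferentiableAt ℝ f x) (hθ₁ : 1 / 2 ≤ θ) (hθ₂ : θ ≤ 1) (hK : 0 ≤ K)
    (hyx : ‖y - x‖ ≤ 1) (hx : |f x - c| ^ θ ≤ K * ‖gradient f x‖) :
    |f x + 1 / 2 * ‖y - x‖ ^ 2 - c| ^ θ ≤
      (K + 1) * ‖fderiv ℝ (fun p : E × E => f p.1 + 1 / 2 * ‖p.2 - p.1‖ ^ 2) (x, y)‖ := by
  set L := (fderiv ℝ f x).comp (fst ℝ E E) + (innerSL ℝ (y - x)).comp (snd ℝ E E - fst ℝ E E)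
  obtain ⟨hfx, hyx_le⟩ :=
    max_le_iff.mp (max_norm_le_norm_comp_fst_add_comp_sub (fderiv ℝ f x) (innerSL ℝ (y - x)))
  rw [innerSL_apply_norm] at hyx_le
  have hgrad : ‖gradient f x‖ = ‖fderiv ℝ f x‖ := by
    rw [← toDual_gradient, LinearIsometryEquiv.norm_map]
  rw [(hf.hasFDerivAt.add_half_norm_sub_sq y).fderiv, add_sub_right_comm]
  calc |f x - c + 1 / 2 * ‖y - x‖ ^ 2| ^ θ
      ≤ (|f x - c| + 1 / 2 * ‖y - x‖ ^ 2) ^ θ := by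
        gcongr
        exact (abs_add_le _ _).trans_eq (congrArg _ (abs_of_nonneg (by positivity)))
    _ ≤ |f x - c| ^ θ + (1 / 2 * ‖y - x‖ ^ 2) ^ θ :=
        Real.rpow_add_le_add_rpow (abs_nonneg _) (by positivity) (by linarith) hθ₂
    _ ≤ K * ‖gradient f x‖ + ‖y - x‖ :=
        add_le_add hx (half_sq_rpow_le_self (norm_nonneg _) hyx hθ₁)
    _ ≤ K * ‖L‖ + ‖L‖ := by rw [hgrad]; gcongr
    _ = (K + 1) * ‖L‖ := by ring

end Penalty

theorem loja_transfer_general {m : ℕ} (g : EuclideanSpace ℝ (Fin m) → ℝ)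
    (hg : Differentiable ℝ g) (x₀ : EuclideanSpace ℝ (Fin m))
    (θ K ε : ℝ)
    (hθ₁ : 1 / 2 ≤ θ) (hθ₂ : θ < 1) (hK : 0 < K) (hε : 0 < ε)
    (hKL : ∀ x, ‖x - x₀‖ < ε → |g x - g x₀| ^ θ ≤ K * ‖gradient g x‖) :
    ∃ K' > (0 : ℝ), ∃ ε' > (0 : ℝ),
      ∀ x y : EuclideanSpace ℝ (Fin m), ‖(x, y) - (x₀, x₀)‖ < ε' →
        |(g x + (1 / 2) * ‖y - x‖ ^ 2) - g x₀| ^ θ ≤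
          K' * ‖fderiv ℝ
            (fun p : EuclideanSpace ℝ (Fin m) × EuclideanSpace ℝ (Fin m) =>
              g p.1 + (1 / 2) * ‖p.2 - p.1‖ ^ 2) (x, y)‖ := by
  refine ⟨K + 1, by linarith, min ε (1 / 2), lt_min hε one_half_pos, fun x y hxy => ?_⟩
  have hx : ‖x - x₀‖ < min ε (1 / 2) := (norm_fst_le _).trans_lt hxy
  have hy : ‖y - x₀‖ < min ε (1 / 2) := (norm_snd_le _).trans_lt hxy
  have hyx : ‖y - x‖ ≤ 1 := by
    rw [← sub_sub_sub_cancel_right y x x₀]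
    linarith [norm_sub_le (y - x₀) (x - x₀), min_le_right ε (1 / 2)]
  exact abs_add_half_norm_sub_sq_sub_rpow_le (hg x) hθ₁ hθ₂.le hK.le hyx
    (hKL x (hx.trans_le (min_le_left _ _)))

/-- If `g` satisfies the Łojasiewicz inequality with exponent `θ ∈ [1/2, 1)` and
constant `K` near a critical point `x̄`, then `H(x,y) = g(x) + (1/2)‖y - x‖²`
satisfies the Łojasiewicz inequality with the same exponent `θ` (and some constant
`K' > 0`) near `(x̄, x̄)`. -/
theorem loja_transfer {m : ℕ} (g : EuclideanSpace ℝ (Fin m) → ℝ)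
    (hg : Differentiable ℝ g) (x₀ : EuclideanSpace ℝ (Fin m))
    (hcrit : gradient g x₀ = 0) (θ K ε : ℝ)
    (hθ₁ : 1 / 2 ≤ θ) (hθ₂ : θ < 1) (hK : 0 < K) (hε : 0 < ε)
    (hKL : ∀ x, ‖x - x₀‖ < ε → |g x - g x₀| ^ θ ≤ K * ‖gradient g x‖) :
    ∃ K' > (0 : ℝ), ∃ ε' > (0 : ℝ),
      ∀ x y : EuclideanSpace ℝ (Fin m), ‖(x, y) - (x₀, x₀)‖ < ε' →
        |(g x + (1 / 2) * ‖y - x‖ ^ 2) - g x₀| ^ θ ≤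
          K' * ‖fderiv ℝ
            (fun p : EuclideanSpace ℝ (Fin m) × EuclideanSpace ℝ (Fin m) =>
              g p.1 + (1 / 2) * ‖p.2 - p.1‖ ^ 2) (x, y)‖ :=
  loja_transfer_general g hg x₀ θ K ε hθ₁ hθ₂ hK hε hKL
end

section
/- Let g : ℝ^m → ℝ be differentiable with L-Lipschitz gradient, bounded from below, and let (x_n), (y_n) be generated by y_n = x_n + (βn/(n+α))(x_n - x_{n-1}), x_{n+1} = y_n - s∇g(y_n), with β ∈ (0,1), α > 0, 0 < s < 2(1-β)/L and x_0 = x_{-1}. Then Σ_{n≥1} ‖x_n - x_{n-1}‖² < +∞; in particular x_n - x_{n-1} → 0. -/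
open Filter Topology RealInnerProductSpace Set

/-! Applying the descent lemma for an `L`-smooth `g` at the extrapolated point `yₙ`, once towards
`xₙ₊₁` and once towards `xₙ`, and writing `dₙ = xₙ - xₙ₋₁`, `bₙ = βn/(n+α) ∈ [0, β]`, gives
`g(xₙ₊₁) ≤ g(xₙ) - (1/s - L/2)‖dₙ₊₁‖² + bₙ(1/s - L)⟪dₙ, dₙ₊₁⟫ + L bₙ²‖dₙ‖²`.
Young's inequality on the cross term turns this into a decrease
`Eₙ₊₁ + ρ‖dₙ₊₁‖² ≤ Eₙ` of the energy `Eₙ = g(xₙ) + δ‖dₙ‖²`, where `δ = β|1/s - L|/2 + Lβ²`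
and `ρ = 1/s - L/2 - β|1/s - L| - Lβ²` is positive because `s < 2(1-β)/L`.
Since `E` is bounded below, telescoping shows that `∑ ‖dₙ‖²` converges. -/

variable {F : Type*} [NormedAddCommGroup F] [InnerProductSpace ℝ F] [CompleteSpace F]
  {g : F → ℝ} {L : ℝ}

theorem abs_sub_sub_inner_gradient_le (hg : Differentiable ℝ g)
    (hlip : ∀ u v, ‖gradient g u - gradient g v‖ ≤ L * ‖u - v‖) (u v : F) :
    |g v - g u - ⟪gradient g u, v - u⟫| ≤ L / 2 * ‖v - u‖ ^ 2 := by
  set p : ℝ → F := fun t => u + t • (v - u)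
  have hp : ∀ t, HasDerivAt p (v - u) t := fun t => by
    simpa [p] using ((hasDerivAt_id t).smul_const (v - u)).const_add u
  have hφ : ∀ t, HasDerivAt (fun t => g (p t) - g u - t * ⟪gradient g u, v - u⟫)
      ⟪gradient g (p t) - gradient g u, v - u⟫ t := fun t => by
    have hgp : HasDerivAt (fun t => g (p t)) ⟪gradient g (p t), v - u⟫ t :=
      (hg (p t)).hasGradientAt.hasFDerivAt.comp_hasDerivAt t (hp t)
    exact ((hgp.sub_const (g u)).sub ((hasDerivAt_id t).mul_const _)).congr_deriv
      (by rw [inner_sub_left, one_mul])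
  have hB : ∀ t, HasDerivAt (fun t => L / 2 * t ^ 2 * ‖v - u‖ ^ 2) (L * t * ‖v - u‖ ^ 2) t :=
    fun t =>
      (((hasDerivAt_pow 2 t).const_mul (L / 2)).mul_const _).congr_deriv (by push_cast; ring)
  have key := image_norm_le_of_norm_deriv_right_le_deriv_boundary (a := 0) (b := 1)
    (fun t _ => (hφ t).continuousAt.continuousWithinAt) (fun t _ => (hφ t).hasDerivWithinAt)
    (by simp [p]) hB (fun t ht => ?_) (right_mem_Icc.2 zero_le_one)
  · simpa [p] using key
  · calc ‖⟪gradient g (p t) - gradient g u, v - u⟫‖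
        ≤ ‖gradient g (p t) - gradient g u‖ * ‖v - u‖ := norm_inner_le_norm _ _
      _ ≤ L * ‖p t - u‖ * ‖v - u‖ := by gcongr; exact hlip _ _
      _ = L * t * ‖v - u‖ ^ 2 := by
        simp only [p, add_sub_cancel_left, norm_smul, Real.norm_of_nonneg ht.1]; ring

theorem three_point_descent (hg : Differentiable ℝ g)
    (hlip : ∀ u v, ‖gradient g u - gradient g v‖ ≤ L * ‖u - v‖) (x y z : F) :
    g z ≤ g x + ⟪gradient g y, z - x⟫ + L / 2 * (‖x - y‖ ^ 2 + ‖z - y‖ ^ 2) := by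
  have hz := (abs_le.1 (abs_sub_sub_inner_gradient_le hg hlip y z)).2
  have hx := (abs_le.1 (abs_sub_sub_inner_gradient_le hg hlip y x)).1
  have hsplit : z - x = (z - y) - (x - y) := by abel
  rw [hsplit, inner_sub_right]
  linarith

namespace InertialGradient

noncomputable def energyWeight (s L β : ℝ) : ℝ := β * |s⁻¹ - L| / 2 + L * β ^ 2

noncomputable def decreaseRate (s L β : ℝ) : ℝ := s⁻¹ - L / 2 - β * |s⁻¹ - L| - L * β ^ 2

theorem energyWeight_nonneg {s L β : ℝ} (hL : 0 ≤ L) (hβ : 0 ≤ β) :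
    0 ≤ energyWeight s L β := by
  unfold energyWeight; positivity

theorem decreaseRate_pos {s L β : ℝ} (hs : 0 < s) (hL : 0 ≤ L) (hβ₀ : 0 ≤ β) (hβ₁ : β < 1)
    (hsL : s * L < 2 * (1 - β)) : 0 < decreaseRate s L β := by
  have hL' : L < 2 * (1 - β) * s⁻¹ := by
    rw [← div_eq_mul_inv, lt_div_iff₀ hs]; linarith
  have hs' : 0 < s⁻¹ := inv_pos.2 hs
  unfold decreaseRate
  rcases le_or_gt L s⁻¹ with h | h
  · rw [abs_of_nonneg (sub_nonneg.2 h)]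
    nlinarith [mul_nonneg (mul_nonneg hβ₀ hL) (sub_nonneg.2 hβ₁.le)]
  · rw [abs_of_neg (sub_neg.2 h)]
    nlinarith [mul_lt_mul_of_pos_right hL' (by positivity : (0 : ℝ) < 1 / 2 + β + β ^ 2),
      pow_nonneg hβ₀ 3, mul_nonneg hs'.le (pow_nonneg hβ₀ 3)]

variable (hg : Differentiable ℝ g) (hlip : ∀ u v, ‖gradient g u - gradient g v‖ ≤ L * ‖u - v‖)
  {x₀ x₁ x₂ y : F} {b s β : ℝ}
include hg hlip

theorem step_descent (hs : s ≠ 0) (hy : y = x₁ + b • (x₁ - x₀))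
    (hx₂ : x₂ = y - s • gradient g y) :
    g x₂ ≤ g x₁ - (s⁻¹ - L / 2) * ‖x₂ - x₁‖ ^ 2 + b * (s⁻¹ - L) * ⟪x₁ - x₀, x₂ - x₁⟫
      + L * b ^ 2 * ‖x₁ - x₀‖ ^ 2 := by
  have hgrad : gradient g y = s⁻¹ • (b • (x₁ - x₀) - (x₂ - x₁)) := by
    have : b • (x₁ - x₀) - (x₂ - x₁) = s • gradient g y := by rw [hx₂, hy]; abel
    rw [this, inv_smul_smul₀ hs]
  have h₁ : x₁ - y = -(b • (x₁ - x₀)) := by rw [hy]; abel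
  have h₂ : x₂ - y = (x₂ - x₁) - b • (x₁ - x₀) := by rw [hy]; abel
  have := three_point_descent hg hlip x₁ y x₂
  rw [hgrad, h₁, h₂] at this
  generalize x₁ - x₀ = d at this ⊢
  generalize x₂ - x₁ = d' at this ⊢
  simp only [inner_smul_left, inner_sub_left, norm_neg, norm_smul, norm_sub_sq_real,
    real_inner_self_eq_norm_sq, real_inner_comm d, inner_smul_right, mul_pow,
    Real.norm_eq_abs, sq_abs, RCLike.conj_to_real] at this
  linear_combination this

theorem energy_step (hs : 0 < s) (hL : 0 ≤ L) (hb₀ : 0 ≤ b) (hbβ : b ≤ β)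
    (hy : y = x₁ + b • (x₁ - x₀)) (hx₂ : x₂ = y - s • gradient g y) :
    g x₂ + energyWeight s L β * ‖x₂ - x₁‖ ^ 2 + decreaseRate s L β * ‖x₂ - x₁‖ ^ 2
      ≤ g x₁ + energyWeight s L β * ‖x₁ - x₀‖ ^ 2 := by
  have hdescent := step_descent hg hlip hs.ne' hy hx₂
  have hβ : 0 ≤ β := hb₀.trans hbβ
  generalize x₁ - x₀ = d at hdescent ⊢
  generalize x₂ - x₁ = d' at hdescent ⊢
  have hcross : b * (s⁻¹ - L) * ⟪d, d'⟫ ≤ β * |s⁻¹ - L| * ((‖d‖ ^ 2 + ‖d'‖ ^ 2) / 2) :=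
    calc b * (s⁻¹ - L) * ⟪d, d'⟫
        ≤ |b * (s⁻¹ - L) * ⟪d, d'⟫| := le_abs_self _
      _ = b * |s⁻¹ - L| * |⟪d, d'⟫| := by rw [abs_mul, abs_mul, abs_of_nonneg hb₀]
      _ ≤ β * |s⁻¹ - L| * (‖d‖ * ‖d'‖) := by gcongr; exact abs_real_inner_le_norm d d'
      _ ≤ β * |s⁻¹ - L| * ((‖d‖ ^ 2 + ‖d'‖ ^ 2) / 2) := by
          gcongr; nlinarith [sq_nonneg (‖d‖ - ‖d'‖)]
  have hmomentum : L * b ^ 2 * ‖d‖ ^ 2 ≤ L * β ^ 2 * ‖d‖ ^ 2 := by gcongr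
  unfold energyWeight decreaseRate
  linarith

end InertialGradient

theorem summable_of_le_sub_succ {a E : ℕ → ℝ} (ha : ∀ n, 0 ≤ a n) (hE : BddBelow (range E))
    (h : ∀ n, a n ≤ E n - E (n + 1)) : Summable a := by
  obtain ⟨B, hB⟩ := hE
  refine summable_of_sum_range_le (c := E 0 - B) ha fun N => ?_
  calc ∑ k ∈ Finset.range N, a k
      ≤ ∑ k ∈ Finset.range N, (E k - E (k + 1)) := Finset.sum_le_sum fun k _ => h k
    _ = E 0 - E N := Finset.sum_range_sub' E N
    _ ≤ E 0 - B := by linarith [hB ⟨N, rfl⟩]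

open InertialGradient in
theorem sum_sq_diff_finite_general {m : ℕ} (g : EuclideanSpace ℝ (Fin m) → ℝ) (L : ℝ)
    (hdiff : Differentiable ℝ g)
    (hlip : ∀ u v, ‖gradient g u - gradient g v‖ ≤ L * ‖u - v‖)
    (hbdd : BddBelow (Set.range g))
    (β α s : ℝ) (hβ₁ : 0 < β) (hβ₂ : β < 1) (hα : 0 < α)
    (hs₁ : 0 < s) (hs₂ : s < 2 * (1 - β) / L) (hL : 0 < L)
    (x y : ℕ → EuclideanSpace ℝ (Fin m))
    (hy : ∀ n : ℕ, y n = x (n + 1) + ((β * n) / ((n : ℝ) + α)) • (x (n + 1) - x n))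
    (hstep : ∀ n : ℕ, x (n + 2) = y n - s • gradient g (y n)) :
    Summable (fun n => ‖x (n + 1) - x n‖ ^ 2) ∧
    Tendsto (fun n => x (n + 1) - x n) atTop (𝓝 0) := by
  set δ := energyWeight s L β
  set ρ := decreaseRate s L β
  have hρ : 0 < ρ := decreaseRate_pos hs₁ hL.le hβ₁.le hβ₂ (by rwa [lt_div_iff₀ hL] at hs₂)
  have hmomentum : ∀ n : ℕ, 0 ≤ β * n / (n + α) ∧ β * n / (n + α) ≤ β := fun n =>
    ⟨by positivity, div_le_of_le_mul₀ (by positivity) hβ₁.le (by nlinarith)⟩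
  set E : ℕ → ℝ := fun n => g (x (n + 1)) + δ * ‖x (n + 1) - x n‖ ^ 2
  have hdecrease : ∀ n, ρ * ‖x (n + 2) - x (n + 1)‖ ^ 2 ≤ E n - E (n + 1) := fun n => by
    have := energy_step hdiff hlip hs₁ hL.le (hmomentum n).1 (hmomentum n).2 (hy n) (hstep n)
    simp only [E]; linarith
  have hE : BddBelow (Set.range E) := by
    obtain ⟨B, hB⟩ := hbdd
    have hδ : 0 ≤ δ := energyWeight_nonneg hL.le hβ₁.le
    exact ⟨B, Set.forall_mem_range.2 fun n =>
      le_add_of_le_of_nonneg (hB ⟨x (n + 1), rfl⟩) (mul_nonneg hδ (sq_nonneg _))⟩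
  have hsum : Summable fun n => ‖x (n + 1) - x n‖ ^ 2 :=
    (summable_nat_add_iff 1).1 <| (summable_mul_left_iff hρ.ne').1 <|
      summable_of_le_sub_succ (fun n => by positivity) hE hdecrease
  refine ⟨hsum, tendsto_zero_iff_norm_tendsto_zero.2 ?_⟩
  simpa using hsum.tendsto_atTop_zero.sqrt

/-- For the inertial algorithm `yₙ = xₙ + (βn/(n+α))(xₙ - xₙ₋₁)`,
`xₙ₊₁ = yₙ - s∇g(yₙ)` with `g` bounded below, differentiable with `L`-Lipschitz
gradient, `β ∈ (0,1)`, `α > 0`, `0 < s < 2(1-β)/L` and `x₀ = x₋₁`, the squared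
consecutive differences are summable; in particular `xₙ - xₙ₋₁ → 0`.
(Indexing: `x (n+1)` plays the role of `xₙ`, `x 0` that of `x₋₁`.) -/
theorem sum_sq_diff_finite {m : ℕ} (g : EuclideanSpace ℝ (Fin m) → ℝ) (L : ℝ)
    (hdiff : Differentiable ℝ g)
    (hlip : ∀ u v, ‖gradient g u - gradient g v‖ ≤ L * ‖u - v‖)
    (hbdd : BddBelow (Set.range g))
    (β α s : ℝ) (hβ₁ : 0 < β) (hβ₂ : β < 1) (hα : 0 < α)
    (hs₁ : 0 < s) (hs₂ : s < 2 * (1 - β) / L) (hL : 0 < L)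
    (x y : ℕ → EuclideanSpace ℝ (Fin m)) (hinit : x 0 = x 1)
    (hy : ∀ n : ℕ, y n = x (n + 1) + ((β * n) / ((n : ℝ) + α)) • (x (n + 1) - x n))
    (hstep : ∀ n : ℕ, x (n + 2) = y n - s • gradient g (y n)) :
    Summable (fun n => ‖x (n + 1) - x n‖ ^ 2) ∧
    Tendsto (fun n => x (n + 1) - x n) atTop (𝓝 0) :=
  sum_sq_diff_finite_general g L hdiff hlip hbdd β α s hβ₁ hβ₂ hα hs₁ hs₂ hL x y hy hstep
end

section
/- Under the hypotheses of the inertial algorithm (g differentiable with L-Lipschitz gradient, bounded below, β ∈ (0,1), α > 0, 0 < s < 2(1-β)/L), there exists N ∈ ℕ and δ_n > 0 (n ≥ N) such that the sequence (g(y_n) + δ_n‖x_n - x_{n-1}‖²)_{n ≥ N} is nonincreasing and convergent. -/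
open Filter Topology Set InnerProductSpace

/-!
Write `bₙ = βn/(n+α)`. The descent lemma for the `L`-smooth `g` between `yₙ` and `yₙ₊₁`, combined
with `s∇g(yₙ) = bₙ(xₙ - xₙ₋₁) - (xₙ₊₁ - xₙ)`, bounds `s` times the increase of the energy
`g(yₙ) + δ‖xₙ - xₙ₋₁‖²` by minus a quadratic form in `xₙ - xₙ₋₁` and `xₙ₊₁ - xₙ` whose
coefficients depend on `bₙ` and `bₙ₊₁`. For a suitable constant `δ > 0` this form is positive
definite at the limit `bₙ = bₙ₊₁ = β` exactly when `sL < 2(1 - β)`, hence for all large `n` by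
continuity. The energy is then eventually nonincreasing and bounded below by `inf g`, so it
converges.
-/

theorem mul_le_of_discrim_nonpos {A B C a b w : ℝ} (hA : 0 < A) (hdisc : discrim A B C ≤ 0)
    (hw : |w| ≤ a * b) : B * w ≤ A * b ^ 2 + C * a ^ 2 := by
  rw [discrim] at hdisc
  have hBw : B * w ≤ |B| * (|a| * |b|) := calc
    B * w ≤ |B| * |w| := (le_abs_self _).trans (abs_mul B w).le
    _ ≤ |B| * (|a| * |b|) := by gcongr; exact hw.trans ((le_abs_self _).trans (abs_mul a b).le)
  have hsq : 0 ≤ 4 * A * (A * b ^ 2 + C * a ^ 2 - |B| * (|a| * |b|)) := by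
    have e : 4 * A * (A * b ^ 2 + C * a ^ 2 - |B| * (|a| * |b|)) =
        (2 * A * |b| - |B| * |a|) ^ 2 - (B ^ 2 - 4 * A * C) * a ^ 2 := by
      linear_combination (-4 * A ^ 2) * sq_abs b - |B| ^ 2 * sq_abs a - a ^ 2 * sq_abs B
    rw [e]
    exact sub_nonneg.2 ((mul_nonpos_of_nonpos_of_nonneg hdisc (sq_nonneg a)).trans (sq_nonneg _))
  linarith [nonneg_of_mul_nonneg_right hsq (by positivity)]

/-- For inertial parameters `b₁ = bₙ`, `b₂ = bₙ₊₁` and `A, B, C` the arguments of `discrim`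
below, `s` times the decrease of `g(yₙ) + δ‖xₙ - xₙ₋₁‖²` over one step is at least
`A ‖xₙ₊₁ - xₙ‖² - B ⟪xₙ - xₙ₋₁, xₙ₊₁ - xₙ⟫ + C ‖xₙ - xₙ₋₁‖²`; the condition makes this form
positive definite. -/
def AdmissibleWeight (s L δ b₁ b₂ : ℝ) : Prop :=
  0 < (1 + b₂) * (1 - s * L * (1 + b₂) / 2) - s * δ ∧
    discrim ((1 + b₂) * (1 - s * L * (1 + b₂) / 2) - s * δ) (b₁ * (2 + b₂ - s * L * (1 + b₂)))
      (b₁ ^ 2 * (1 - s * L / 2) + s * δ) < 0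

section InertialStep

variable {E : Type*} [NormedAddCommGroup E] [InnerProductSpace ℝ E] [CompleteSpace E]
  {g : E → ℝ} {L s b₁ b₂ : ℝ} {x₀ x₁ x₂ y₀ y₁ : E}

theorem hasDerivAt_comp_add_smul (hdiff : Differentiable ℝ g) (v d : E) (t : ℝ) :
    HasDerivAt (fun t : ℝ => g (v + t • d)) ⟪gradient g (v + t • d), d⟫_ℝ t := by
  have hline : HasDerivAt (fun t : ℝ => v + t • d) d t := by
    simpa using ((hasDerivAt_id t).smul_const d).const_add v
  simpa [toDual_apply_apply, Function.comp_def] using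
    (hdiff _).hasGradientAt.hasFDerivAt.comp_hasDerivAt t hline

theorem descent_lemma (hdiff : Differentiable ℝ g)
    (hlip : ∀ u v, ‖gradient g u - gradient g v‖ ≤ L * ‖u - v‖) (u v : E) :
    g u ≤ g v + ⟪gradient g v, u - v⟫_ℝ + L / 2 * ‖u - v‖ ^ 2 := by
  set d := u - v
  have hbound : ∀ t ∈ Ico (0 : ℝ) 1,
      ⟪gradient g (v + t • d), d⟫_ℝ ≤ ⟪gradient g v, d⟫_ℝ + L * t * ‖d‖ ^ 2 := by
    rintro t ⟨ht, -⟩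
    have := calc ⟪gradient g (v + t • d) - gradient g v, d⟫_ℝ
        ≤ ‖gradient g (v + t • d) - gradient g v‖ * ‖d‖ := real_inner_le_norm _ _
      _ ≤ L * ‖(v + t • d) - v‖ * ‖d‖ := by gcongr; exact hlip _ _
      _ = L * t * ‖d‖ ^ 2 := by
        rw [add_sub_cancel_left, norm_smul, Real.norm_eq_abs, abs_of_nonneg ht]; ring
    rwa [inner_sub_left, sub_le_iff_le_add'] at this
  have hB : ∀ t : ℝ,
      HasDerivAt (fun t : ℝ => g v + t * ⟪gradient g v, d⟫_ℝ + L / 2 * t ^ 2 * ‖d‖ ^ 2)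
        (⟪gradient g v, d⟫_ℝ + L * t * ‖d‖ ^ 2) t := fun t => by
    have h := (((hasDerivAt_id t).mul_const ⟪gradient g v, d⟫_ℝ).const_add (g v)).add
      (((hasDerivAt_pow 2 t).const_mul (L / 2)).mul_const (‖d‖ ^ 2))
    exact h.congr_deriv (by ring)
  have := image_le_of_deriv_right_le_deriv_boundary
    (fun t _ => (hasDerivAt_comp_add_smul hdiff v d t).continuousAt.continuousWithinAt)
    (fun t _ => (hasDerivAt_comp_add_smul hdiff v d t).hasDerivWithinAt)
    (by simp) (fun t _ => (hB t).continuousAt.continuousWithinAt)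
    (fun t _ => (hB t).hasDerivWithinAt) hbound (right_mem_Icc.2 zero_le_one)
  simpa [d] using this

theorem inertial_step_descent (hdiff : Differentiable ℝ g)
    (hlip : ∀ u v, ‖gradient g u - gradient g v‖ ≤ L * ‖u - v‖) (hs : 0 ≤ s)
    (hy₀ : y₀ = x₁ + b₁ • (x₁ - x₀)) (hy₁ : y₁ = x₂ + b₂ • (x₂ - x₁))
    (hx₂ : x₂ = y₀ - s • gradient g y₀) :
    s * (g y₁ - g y₀) ≤ b₁ * (2 + b₂ - s * L * (1 + b₂)) * ⟪x₁ - x₀, x₂ - x₁⟫_ℝ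
      - (1 + b₂) * (1 - s * L * (1 + b₂) / 2) * ‖x₂ - x₁‖ ^ 2
      - b₁ ^ 2 * (1 - s * L / 2) * ‖x₁ - x₀‖ ^ 2 := by
  set d := x₁ - x₀
  set d' := x₂ - x₁
  have hsG : s • gradient g y₀ = b₁ • d - d' := by
    linear_combination (norm := module) hx₂ + hy₀
  have hΔ : y₁ - y₀ = (1 + b₂) • d' - b₁ • d := by
    linear_combination (norm := module) hy₁ - hy₀
  have hexpand : s * ⟪gradient g y₀, y₁ - y₀⟫_ℝ + s * L / 2 * ‖y₁ - y₀‖ ^ 2 =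
      b₁ * (2 + b₂ - s * L * (1 + b₂)) * ⟪d, d'⟫_ℝ
        - (1 + b₂) * (1 - s * L * (1 + b₂) / 2) * ‖d'‖ ^ 2
        - b₁ ^ 2 * (1 - s * L / 2) * ‖d‖ ^ 2 := by
    rw [← real_inner_smul_left, hsG, ← real_inner_self_eq_norm_sq, hΔ]
    simp only [inner_sub_left, inner_sub_right, real_inner_smul_left, real_inner_smul_right,
      real_inner_self_eq_norm_sq, real_inner_comm d d', norm_smul, mul_pow, Real.norm_eq_abs,
      sq_abs]
    ring
  calc s * (g y₁ - g y₀)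
      ≤ s * (⟪gradient g y₀, y₁ - y₀⟫_ℝ + L / 2 * ‖y₁ - y₀‖ ^ 2) := by
        gcongr; linarith [descent_lemma hdiff hlip y₁ y₀]
    _ = _ := by rw [← hexpand]; ring

theorem inertial_energy_le {δ : ℝ} (hdiff : Differentiable ℝ g)
    (hlip : ∀ u v, ‖gradient g u - gradient g v‖ ≤ L * ‖u - v‖) (hs : 0 < s)
    (hδ : AdmissibleWeight s L δ b₁ b₂)
    (hy₀ : y₀ = x₁ + b₁ • (x₁ - x₀)) (hy₁ : y₁ = x₂ + b₂ • (x₂ - x₁))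
    (hx₂ : x₂ = y₀ - s • gradient g y₀) :
    g y₁ + δ * ‖x₂ - x₁‖ ^ 2 ≤ g y₀ + δ * ‖x₁ - x₀‖ ^ 2 := by
  have hstep := inertial_step_descent hdiff hlip hs.le hy₀ hy₁ hx₂
  have hform := mul_le_of_discrim_nonpos hδ.1 hδ.2.le (abs_real_inner_le_norm (x₁ - x₀) (x₂ - x₁))
  have : s * (g y₁ + δ * ‖x₂ - x₁‖ ^ 2 - (g y₀ + δ * ‖x₁ - x₀‖ ^ 2)) ≤ 0 := by linarith
  exact sub_nonpos.1 (nonpos_of_mul_nonpos_right this hs)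

end InertialStep

/-- `δ` is chosen so that the two outer coefficients of the quadratic form agree at the limit;
the discriminant condition then reads `|B| < 2A`, which is `s L < 2 (1 - β)`. -/
theorem exists_admissibleWeight {s L β : ℝ} (hβ : 0 < β) (hs : 0 < s)
    (hsL : s * L < 2 * (1 - β)) : ∃ δ, 0 < δ ∧ AdmissibleWeight s L δ β β := by
  refine ⟨((1 + β - β ^ 2) - s * L * (1 + 2 * β) / 2) / (2 * s), ?_, ?_⟩
  · apply div_pos _ (by positivity)
    nlinarith
  · have hsδ : s * (((1 + β - β ^ 2) - s * L * (1 + 2 * β) / 2) / (2 * s)) =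
        ((1 + β - β ^ 2) - s * L * (1 + 2 * β) / 2) / 2 := by field_simp
    have h₁ : 0 < 1 - β - s * L / 2 := by linarith
    have h₂ : 0 < 1 + β - s * L * (1 + 2 * β) / 2 := by nlinarith
    rw [AdmissibleWeight, discrim, hsδ]
    constructor
    · nlinarith
    · nlinarith [mul_pos h₁ (mul_pos (by positivity : (0 : ℝ) < 1 + 2 * β) h₂)]

theorem AdmissibleWeight.eventually {s L δ β : ℝ} {b : ℕ → ℝ} (hb : Tendsto b atTop (𝓝 β))
    (h : AdmissibleWeight s L δ β β) : ∀ᶠ n in atTop, AdmissibleWeight s L δ (b n) (b (n + 1)) := by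
  have hopen : IsOpen {p : ℝ × ℝ | AdmissibleWeight s L δ p.1 p.2} := by
    simp only [AdmissibleWeight, discrim, Set.ofPred_and]
    refine (isOpen_lt ?_ ?_).inter (isOpen_lt ?_ ?_) <;> fun_prop
  exact (hb.prodMk_nhds (hb.comp (tendsto_add_atTop_nat 1))).eventually (hopen.mem_nhds h)

theorem exists_tendsto_of_succ_le_of_bddBelow {α : Type*} [ConditionallyCompleteLinearOrder α]
    [TopologicalSpace α] [OrderTopology α] {u : ℕ → α} {N : ℕ} (hu : ∀ n ≥ N, u (n + 1) ≤ u n)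
    (hbdd : BddBelow (range u)) : ∃ l, Tendsto u atTop (𝓝 l) := by
  have hanti : Antitone fun k => u (k + N) :=
    antitone_nat_of_succ_le fun k => by simpa [Nat.add_right_comm] using hu (k + N) (by omega)
  have hbdd' : BddBelow (range fun k => u (k + N)) := hbdd.mono (range_comp_subset_range _ u)
  exact ⟨_, (tendsto_add_atTop_iff_nat N).1 (tendsto_atTop_ciInf hanti hbdd')⟩

/-- `x (n + 1)` is the paper's `xₙ`, and `x 0` its `x₋₁`. -/
theorem energy_decreasing_general {m : ℕ} (g : EuclideanSpace ℝ (Fin m) → ℝ) (L : ℝ)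
    (hdiff : Differentiable ℝ g)
    (hlip : ∀ u v, ‖gradient g u - gradient g v‖ ≤ L * ‖u - v‖)
    (hbdd : BddBelow (Set.range g))
    (β α s : ℝ) (hβ₁ : 0 < β)
    (hs₁ : 0 < s) (hs₂ : s < 2 * (1 - β) / L) (hL : 0 < L)
    (x y : ℕ → EuclideanSpace ℝ (Fin m))
    (hy : ∀ n : ℕ, y n = x (n + 1) + ((β * n) / ((n : ℝ) + α)) • (x (n + 1) - x n))
    (hstep : ∀ n : ℕ, x (n + 2) = y n - s • gradient g (y n)) :
    ∃ N : ℕ, ∃ δ : ℕ → ℝ, (∀ n ≥ N, 0 < δ n) ∧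
      (∀ n ≥ N, g (y (n + 1)) + δ (n + 1) * ‖x (n + 2) - x (n + 1)‖ ^ 2 ≤
        g (y n) + δ n * ‖x (n + 1) - x n‖ ^ 2) ∧
      ∃ l : ℝ, Tendsto (fun n => g (y n) + δ n * ‖x (n + 1) - x n‖ ^ 2) atTop (𝓝 l) := by
  obtain ⟨δ, hδ, hδβ⟩ := exists_admissibleWeight hβ₁ hs₁ ((lt_div_iff₀ hL).1 hs₂)
  have hb : Tendsto (fun n : ℕ => β * n / (n + α)) atTop (𝓝 β) := by
    simpa [mul_div_assoc] using (tendsto_natCast_div_add_atTop α).const_mul β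
  obtain ⟨N, hN⟩ := eventually_atTop.1 (hδβ.eventually hb)
  have hmono : ∀ n ≥ N, g (y (n + 1)) + δ * ‖x (n + 2) - x (n + 1)‖ ^ 2 ≤
      g (y n) + δ * ‖x (n + 1) - x n‖ ^ 2 := fun n hn =>
    inertial_energy_le hdiff hlip hs₁ (hN n hn) (hy n) (hy (n + 1)) (hstep n)
  refine ⟨N, fun _ => δ, fun _ _ => hδ, hmono, exists_tendsto_of_succ_le_of_bddBelow hmono ?_⟩
  obtain ⟨c, hc⟩ := hbdd
  exact ⟨c, forall_mem_range.2 fun n =>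
    (hc (mem_range_self _)).trans (le_add_of_nonneg_right (by positivity))⟩

/-- Under the hypotheses of the inertial algorithm there exist `N` and positive
weights `δₙ` (for `n ≥ N`) such that `g(yₙ) + δₙ‖xₙ - xₙ₋₁‖²` is nonincreasing
from `N` on and convergent.
(Indexing: `x (n+1)` plays the role of `xₙ`, `x 0` that of `x₋₁`.) -/
theorem energy_decreasing {m : ℕ} (g : EuclideanSpace ℝ (Fin m) → ℝ) (L : ℝ)
    (hdiff : Differentiable ℝ g)
    (hlip : ∀ u v, ‖gradient g u - gradient g v‖ ≤ L * ‖u - v‖)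
    (hbdd : BddBelow (Set.range g))
    (β α s : ℝ) (hβ₁ : 0 < β) (hβ₂ : β < 1) (hα : 0 < α)
    (hs₁ : 0 < s) (hs₂ : s < 2 * (1 - β) / L) (hL : 0 < L)
    (x y : ℕ → EuclideanSpace ℝ (Fin m)) (hinit : x 0 = x 1)
    (hy : ∀ n : ℕ, y n = x (n + 1) + ((β * n) / ((n : ℝ) + α)) • (x (n + 1) - x n))
    (hstep : ∀ n : ℕ, x (n + 2) = y n - s • gradient g (y n)) :
    ∃ N : ℕ, ∃ δ : ℕ → ℝ, (∀ n ≥ N, 0 < δ n) ∧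
      (∀ n ≥ N, g (y (n + 1)) + δ (n + 1) * ‖x (n + 2) - x (n + 1)‖ ^ 2 ≤
        g (y n) + δ n * ‖x (n + 1) - x n‖ ^ 2) ∧
      ∃ l : ℝ, Tendsto (fun n => g (y n) + δ n * ‖x (n + 1) - x n‖ ^ 2) atTop (𝓝 l) :=
  energy_decreasing_general g L hdiff hlip hbdd β α s hβ₁ hs₁ hs₂ hL x y hy hstep
end

section
/- Let g be differentiable with L-Lipschitz gradient and let (x_n), (y_n) satisfy y_n = x_n + (βn/(n+α))(x_n - x_{n-1}) and x_{n+1} = y_n - s∇g(y_n) with β ∈ (0,1), α > 0, 0 < s < 2/L. Then for every n, g(x_n) - g(y_n) ≤ (1/(2s(2 - sL)))‖x_{n+1} - x_n‖². -/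
/-!
The descent lemma at `yₙ` bounds `g(xₙ₊₁) - g(yₙ)` by `⟪∇g(yₙ), u⟫ + (L/2)‖u‖²` with
`u = xₙ₊₁ - yₙ`. Writing `v = xₙ₊₂ - xₙ₊₁`, the gradient step gives `s∇g(yₙ) = -(u + v)`, so
`s (g(xₙ₊₁) - g(yₙ)) ≤ -((2 - sL)/2)‖u‖² - ⟪v, u⟫`, and Young's inequality with weight `2 - sL`
absorbs the cross term into `‖v‖² / (2(2 - sL))`.

The descent lemma itself follows from the monotonicity of
`t ↦ g(a + t(b - a)) - t ⟪∇g(a), b - a⟫ - (L/2) t² ‖b - a‖²` on `[0, 1]`.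
-/

open Set InnerProductSpace RealInnerProductSpace

theorem le_add_deriv_add_of_deriv_le_add_mul {φ φ' : ℝ → ℝ} {K : ℝ}
    (hφ : ∀ t, HasDerivAt φ (φ' t) t) (hφ' : ∀ t ∈ Ioo (0 : ℝ) 1, φ' t ≤ φ' 0 + K * t) :
    φ 1 ≤ φ 0 + φ' 0 + K / 2 := by
  have hψ : ∀ t, HasDerivAt (fun t ↦ φ t - φ' 0 * t - K / 2 * t ^ 2) (φ' t - φ' 0 - K * t) t := by
    intro t
    refine (((hφ t).sub ((hasDerivAt_id t).const_mul (φ' 0))).sub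
      ((hasDerivAt_pow 2 t).const_mul (K / 2))).congr_deriv ?_
    norm_num
    ring
  have hanti : AntitoneOn (fun t ↦ φ t - φ' 0 * t - K / 2 * t ^ 2) (Icc 0 1) :=
    antitoneOn_of_hasDerivWithinAt_nonpos (convex_Icc 0 1)
      (fun t _ ↦ (hψ t).continuousAt.continuousWithinAt)
      (fun t _ ↦ (hψ t).hasDerivWithinAt)
      (fun t ht ↦ by rw [interior_Icc] at ht; linarith [hφ' t ht])
  have := hanti (left_mem_Icc.2 zero_le_one) (right_mem_Icc.2 zero_le_one) zero_le_one
  simp only at this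
  linarith

theorem le_add_fderiv_add_of_norm_fderiv_sub_le {E : Type*} [NormedAddCommGroup E]
    [NormedSpace ℝ E] {f : E → ℝ} {L : ℝ} (hf : Differentiable ℝ f)
    (hlip : ∀ u v, ‖fderiv ℝ f u - fderiv ℝ f v‖ ≤ L * ‖u - v‖) (a b : E) :
    f b ≤ f a + fderiv ℝ f a (b - a) + L / 2 * ‖b - a‖ ^ 2 := by
  set v := b - a
  have hline : ∀ t : ℝ, HasDerivAt (fun t ↦ f (a + t • v)) (fderiv ℝ f (a + t • v) v) t := by
    intro t
    have := (hf (a + t • v)).hasFDerivAt.comp_hasDerivAt t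
      (((hasDerivAt_id t).smul_const v).const_add a)
    rwa [one_smul] at this
  have hbound : ∀ t ∈ Ioo (0 : ℝ) 1,
      fderiv ℝ f (a + t • v) v ≤ fderiv ℝ f (a + (0 : ℝ) • v) v + L * ‖v‖ ^ 2 * t := by
    intro t ht
    calc fderiv ℝ f (a + t • v) v
        = fderiv ℝ f a v + (fderiv ℝ f (a + t • v) - fderiv ℝ f a) v := by simp
      _ ≤ fderiv ℝ f a v + L * ‖(a + t • v) - a‖ * ‖v‖ := by
        gcongr
        exact (le_abs_self _).trans <| ((fderiv ℝ f (a + t • v) - fderiv ℝ f a).le_opNorm v).trans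
          (mul_le_mul_of_nonneg_right (hlip _ _) (norm_nonneg v))
      _ = fderiv ℝ f (a + (0 : ℝ) • v) v + L * ‖v‖ ^ 2 * t := by
        rw [add_sub_cancel_left, norm_smul, Real.norm_of_nonneg ht.1.le]
        simp only [zero_smul, add_zero, add_right_inj]
        ring
  have := le_add_deriv_add_of_deriv_le_add_mul hline hbound
  simp only [zero_smul, add_zero, one_smul, v, add_sub_cancel] at this
  linarith

theorem le_add_inner_gradient_add_of_norm_gradient_sub_le {F : Type*} [NormedAddCommGroup F]
    [InnerProductSpace ℝ F] [CompleteSpace F] {f : F → ℝ} {L : ℝ} (hf : Differentiable ℝ f)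
    (hlip : ∀ u v, ‖gradient f u - gradient f v‖ ≤ L * ‖u - v‖) (a b : F) :
    f b ≤ f a + ⟪gradient f a, b - a⟫ + L / 2 * ‖b - a‖ ^ 2 := by
  have hfderiv : ∀ u, fderiv ℝ f u = toDual ℝ F (gradient f u) := fun u ↦
    ((toDual ℝ F).apply_symm_apply _).symm
  have := le_add_fderiv_add_of_norm_fderiv_sub_le (L := L) hf (fun u v ↦ ?_) a b
  · rwa [hfderiv, toDual_apply_apply] at this
  · rw [hfderiv, hfderiv, ← map_sub, LinearIsometryEquiv.norm_map]
    exact hlip u v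

theorem sub_le_of_gradient_step {F : Type*} [NormedAddCommGroup F] [InnerProductSpace ℝ F]
    [CompleteSpace F] {g : F → ℝ} {L s : ℝ} (hg : Differentiable ℝ g)
    (hlip : ∀ u v, ‖gradient g u - gradient g v‖ ≤ L * ‖u - v‖) (hs : 0 < s) (hsL : s * L < 2)
    (x y : F) :
    g x - g y ≤ 1 / (2 * s * (2 - s * L)) * ‖(y - s • gradient g y) - x‖ ^ 2 := by
  set c := 2 - s * L
  have hc : 0 < c := by linarith
  set u := x - y
  set v := (y - s • gradient g y) - x
  have hinner : s * ⟪gradient g y, u⟫ = -‖u‖ ^ 2 - ⟪v, u⟫ := by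
    have hstep : s • gradient g y = -(u + v) := by simp only [u, v]; abel
    rw [← real_inner_smul_left, hstep, inner_neg_left, inner_add_left,
      real_inner_self_eq_norm_sq]
    ring
  have hdecrease : s * (g x - g y) ≤ -(c / 2) * ‖u‖ ^ 2 - ⟪v, u⟫ := by
    have := mul_le_mul_of_nonneg_left
      (le_add_inner_gradient_add_of_norm_gradient_sub_le hg hlip y x) hs.le
    linarith
  have hyoung : -(2 * c * ⟪v, u⟫) ≤ c ^ 2 * ‖u‖ ^ 2 + ‖v‖ ^ 2 := by
    have := two_mul_le_add_sq (c * ‖u‖) ‖v‖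
    nlinarith [neg_le_of_abs_le (abs_real_inner_le_norm v u)]
  rw [div_mul_eq_mul_div, one_mul, le_div_iff₀ (by positivity)]
  nlinarith [mul_le_mul_of_nonneg_left hdecrease (by positivity : (0 : ℝ) ≤ 2 * c)]

theorem value_gap_bound_general {m : ℕ} (g : EuclideanSpace ℝ (Fin m) → ℝ) (L : ℝ)
    (hdiff : Differentiable ℝ g)
    (hlip : ∀ u v, ‖gradient g u - gradient g v‖ ≤ L * ‖u - v‖)
    (s : ℝ) (hL : 0 < L) (hs₁ : 0 < s) (hs₂ : s < 2 / L)
    (x y : ℕ → EuclideanSpace ℝ (Fin m))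
    (hstep : ∀ n : ℕ, x (n + 2) = y n - s • gradient g (y n)) :
    ∀ n : ℕ, g (x (n + 1)) - g (y n) ≤
      1 / (2 * s * (2 - s * L)) * ‖x (n + 2) - x (n + 1)‖ ^ 2 := by
  intro n
  rw [hstep n]
  exact sub_le_of_gradient_step hdiff hlip hs₁ ((lt_div_iff₀ hL).mp hs₂) _ _

/-- For the inertial algorithm with `0 < s < 2/L`, one has
`g(xₙ) - g(yₙ) ≤ (1/(2s(2 - sL)))‖xₙ₊₁ - xₙ‖²` for every `n`.
(Indexing: `x (n+1)` plays the role of `xₙ`.) -/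
theorem value_gap_bound {m : ℕ} (g : EuclideanSpace ℝ (Fin m) → ℝ) (L : ℝ)
    (hdiff : Differentiable ℝ g)
    (hlip : ∀ u v, ‖gradient g u - gradient g v‖ ≤ L * ‖u - v‖)
    (β α s : ℝ) (hβ₁ : 0 < β) (hβ₂ : β < 1) (hα : 0 < α)
    (hL : 0 < L) (hs₁ : 0 < s) (hs₂ : s < 2 / L)
    (x y : ℕ → EuclideanSpace ℝ (Fin m))
    (hy : ∀ n : ℕ, y n = x (n + 1) + ((β * n) / ((n : ℝ) + α)) • (x (n + 1) - x n))
    (hstep : ∀ n : ℕ, x (n + 2) = y n - s • gradient g (y n)) :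
    ∀ n : ℕ, g (x (n + 1)) - g (y n) ≤
      1 / (2 * s * (2 - s * L)) * ‖x (n + 2) - x (n + 1)‖ ^ 2 :=
  value_gap_bound_general g L hdiff hlip s hL hs₁ hs₂ x y hstep
end

section
/- Let F : ℝ^m × ℝ^m → ℝ be C¹, φ ∈ Θ_η concave desingularizing. Suppose a sequence (z_n) satisfies the KL inequality φ'(F(z_k) - F(z*))‖∇F(z_k)‖ ≥ 1 at a point z* where F(z*) < F(z_k) < F(z*) + η, together with (H1): a‖x_k - x_{k-1}‖² ≤ F(z_k) - F(z_{k+1}) and (H2): ‖∇F(z_k)‖ ≤ b(‖x_{k+1} - x_k‖ + ‖x_k - x_{k-1}‖), where a, b > 0. Then 2‖x_k - x_{k-1}‖ ≤ ‖x_{k+1} - x_k‖ + (9b/(4a))(φ(F(z_k) - F(z*)) - φ(F(z_{k+1}) - F(z*))). -/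
open Filter Topology

/-- Abstract KL step inequality: if `F` is `C¹`, `φ` is a concave desingularizing
function on `[0,η)` with derivative `φ'`, the KL inequality
`φ'(F(z_k) - F(z*))‖∇F(z_k)‖ ≥ 1` holds at `z_k`, together with the sufficient
decrease (H1) and the relative error (H2), then
`2‖x_k - x_{k-1}‖ ≤ ‖x_{k+1} - x_k‖ + (9b/(4a))(φ(F(z_k) - F(z*)) - φ(F(z_{k+1}) - F(z*)))`. -/
theorem abstract_kl_step {m : ℕ} {Z : Type*} [NormedAddCommGroup Z]
    [InnerProductSpace ℝ Z] [CompleteSpace Z]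
    (F : Z → ℝ) (hF : ContDiff ℝ 1 F)
    (η : ℝ) (hη : 0 < η) (φ φ' : ℝ → ℝ)
    (hconc : ConcaveOn ℝ (Set.Ico 0 η) φ) (hφ0 : φ 0 = 0)
    (hφcont : ContinuousOn φ (Set.Ico 0 η))
    (hderiv : ∀ t ∈ Set.Ioo 0 η, HasDerivAt φ (φ' t) t)
    (hφ'pos : ∀ t ∈ Set.Ioo 0 η, 0 < φ' t)
    (a b : ℝ) (ha : 0 < a) (hb : 0 < b)
    (x : ℕ → EuclideanSpace ℝ (Fin m)) (z : ℕ → Z) (zs : Z)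
    (k : ℕ) (hk : 1 ≤ k)
    (hlow : F zs < F (z k)) (hup : F (z k) < F zs + η)
    (hnext : F zs ≤ F (z (k + 1)))
    (hKL : φ' (F (z k) - F zs) * ‖gradient F (z k)‖ ≥ 1)
    (hH1 : a * ‖x k - x (k - 1)‖ ^ 2 ≤ F (z k) - F (z (k + 1)))
    (hH2 : ‖gradient F (z k)‖ ≤ b * (‖x (k + 1) - x k‖ + ‖x k - x (k - 1)‖)) :
    2 * ‖x k - x (k - 1)‖ ≤ ‖x (k + 1) - x k‖ +
      (9 * b / (4 * a)) * (φ (F (z k) - F zs) - φ (F (z (k + 1)) - F zs)) := by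
  set t := ‖x k - x (k - 1)‖ with ht
  set s := ‖x (k + 1) - x k‖ with hs
  have hts : 0 ≤ t := norm_nonneg _
  have hss : 0 ≤ s := norm_nonneg _
  set u := F (z k) - F zs with hu
  set v := F (z (k + 1)) - F zs with hv
  have hu_mem : u ∈ Set.Ioo 0 η := ⟨by simp [hu]; linarith, by simp [hu]; linarith⟩
  have hvu : v ≤ u := by
    have : 0 ≤ a * t ^ 2 := by positivity
    simp only [hu, hv]; linarith
  have hv0 : 0 ≤ v := by simp [hv]; linarith
  have hv_mem : v ∈ Set.Ico 0 η := ⟨hv0, lt_of_le_of_lt hvu hu_mem.2⟩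
  have hu_mem' : u ∈ Set.Ico 0 η := ⟨le_of_lt hu_mem.1, hu_mem.2⟩
  have hφ'u : 0 < φ' u := hφ'pos u hu_mem
  -- tangent inequality from concavity
  have htang : φ' u * (u - v) ≤ φ u - φ v := by
    rcases eq_or_lt_of_le hvu with h | h
    · simp [h]
    · have hsl := hconc.le_slope_of_hasDerivAt hv_mem hu_mem' h (hderiv u hu_mem)
      rw [slope_def_field, le_div_iff₀ (by linarith)] at hsl
      linarith
  -- s + t > 0
  have hS : 0 < s + t := by
    rcases lt_or_ge 0 (s + t) with h | h
    · exact h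
    · exfalso
      have hg : ‖gradient F (z k)‖ ≤ 0 := by nlinarith
      have hg0 : ‖gradient F (z k)‖ = 0 := le_antisymm hg (norm_nonneg _)
      rw [hg0, mul_zero] at hKL
      linarith
  -- φ'(u) ≥ 1/(b(s+t))
  have hglb : 1 ≤ φ' u * (b * (s + t)) := by
    calc (1 : ℝ) ≤ φ' u * ‖gradient F (z k)‖ := hKL
      _ ≤ φ' u * (b * (s + t)) := mul_le_mul_of_nonneg_left hH2 (le_of_lt hφ'u)
  -- u - v ≥ a t²
  have huv : a * t ^ 2 ≤ u - v := by simp only [hu, hv]; linarith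
  -- combine: φ u - φ v ≥ a t² / (b (s+t))
  have hkey : a * t ^ 2 / (b * (s + t)) ≤ φ u - φ v := by
    have hbS : 0 < b * (s + t) := by positivity
    rw [div_le_iff₀ hbS]
    have h1 : 0 ≤ a * t ^ 2 := by positivity
    calc a * t ^ 2 ≤ (φ' u * (b * (s + t))) * (a * t ^ 2) := by nlinarith
      _ = (φ' u * (a * t ^ 2)) * (b * (s + t)) := by ring
      _ ≤ (φ' u * (u - v)) * (b * (s + t)) :=
          mul_le_mul_of_nonneg_right
            (mul_le_mul_of_nonneg_left huv (le_of_lt hφ'u)) (le_of_lt hbS)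
      _ ≤ (φ u - φ v) * (b * (s + t)) := mul_le_mul_of_nonneg_right htang (le_of_lt hbS)
  -- finish
  have hc : 0 < 9 * b / (4 * a) := by positivity
  have hfin : 9 * b / (4 * a) * (a * t ^ 2 / (b * (s + t))) ≤
      9 * b / (4 * a) * (φ u - φ v) := mul_le_mul_of_nonneg_left hkey (le_of_lt hc)
  have hsimp : 9 * b / (4 * a) * (a * t ^ 2 / (b * (s + t))) = 9 * t ^ 2 / (4 * (s + t)) := by
    field_simp
  rw [hsimp] at hfin
  have hquad : 2 * t ≤ s + 9 * t ^ 2 / (4 * (s + t)) := by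
    rw [← sub_nonneg, show s + 9 * t ^ 2 / (4 * (s + t)) - 2 * t
        = (2 * s - t) ^ 2 / (4 * (s + t)) by field_simp; ring]
    exact div_nonneg (sq_nonneg _) (by linarith)
  linarith
end
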